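/- arXiv:2601.05349 — 2 statements merged into one kernel-verified Lean document; each statement's English description precedes it below -/
import Mathlib

section
/- The function W(x) = 1/(1 + |x|/2) on ℝ³ satisfies the elliptic equation ΔW + |x|⁻¹ W³ = 0 at every point x ≠ 0. -/
/-!
For a radial function `y ↦ g ‖y‖` on an `n`-dimensional inner product space, the sum of the second
derivatives along an orthonormal basis at `x ≠ 0` is `g'' r + (n - 1) / r * g' r` with `r = ‖x‖`.
For the profile `g r = (1 + r / 2)⁻¹` in dimension three this is
`g³ / 2 - g² / r = -g³ / r`, since `g⁻¹ - r / 2 = 1`.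
-/

noncomputable section

abbrev E3 := EuclideanSpace ℝ (Fin 3)

def W (x : E3) : ℝ := (1 + ‖x‖ / 2)⁻¹

def lap (f : E3 → ℝ) (x : E3) : ℝ :=
  ∑ i : Fin 3,
    fderiv ℝ (fun y => fderiv ℝ f y (EuclideanSpace.single i 1)) x (EuclideanSpace.single i 1)

open Filter Topology
open scoped RealInnerProductSpace

section Radial

variable {E : Type*} [NormedAddCommGroup E] [InnerProductSpace ℝ E] {x : E}

theorem hasFDerivAt_norm_of_ne_zero (hx : x ≠ 0) :
    HasFDerivAt (‖·‖) (‖x‖⁻¹ • innerSL ℝ x) x := by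
  have hsqrt := (hasStrictFDerivAt_norm_sq x).hasFDerivAt.sqrt (by positivity)
  simp only [Real.sqrt_sq (norm_nonneg _)] at hsqrt
  refine hsqrt.congr_fderiv ?_
  ext v
  simp only [smul_apply, add_apply, innerSL_apply_apply, smul_eq_mul, two_smul]
  field_simp
  ring

theorem HasDerivAt.hasFDerivAt_comp_norm {g : ℝ → ℝ} {g' : ℝ} (hg : HasDerivAt g g' ‖x‖)
    (hx : x ≠ 0) : HasFDerivAt (fun y => g ‖y‖) ((g' / ‖x‖) • innerSL ℝ x) x := by
  have := hg.comp_hasFDerivAt x (hasFDerivAt_norm_of_ne_zero hx)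
  rwa [smul_smul, ← div_eq_mul_inv] at this

theorem fderiv_comp_norm_apply {g : ℝ → ℝ} {g' : ℝ} (hg : HasDerivAt g g' ‖x‖) (hx : x ≠ 0)
    (v : E) : fderiv ℝ (fun y => g ‖y‖) x v = g' / ‖x‖ * ⟪x, v⟫ := by
  simp [(hg.hasFDerivAt_comp_norm hx).fderiv]

variable {g g' : ℝ → ℝ} {g'' : ℝ}

theorem fderiv_fderiv_comp_norm_apply (hx : x ≠ 0) (hg : ∀ᶠ r in 𝓝 ‖x‖, HasDerivAt g (g' r) r)
    (hg' : HasDerivAt g' g'' ‖x‖) (v : E) :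
    fderiv ℝ (fun y => fderiv ℝ (fun z => g ‖z‖) y v) x v =
      (g'' - g' ‖x‖ / ‖x‖) / ‖x‖ ^ 2 * ⟪x, v⟫ ^ 2 + g' ‖x‖ / ‖x‖ * ‖v‖ ^ 2 := by
  have hr : ‖x‖ ≠ 0 := norm_ne_zero_iff.mpr hx
  have hgrad : (fun y => fderiv ℝ (fun z => g ‖z‖) y v) =ᶠ[𝓝 x]
      fun y => g' ‖y‖ / ‖y‖ * ⟪v, y⟫ := by
    filter_upwards [continuous_norm.continuousAt.preimage_mem_nhds hg,
      isOpen_ne.mem_nhds hx] with y hgy hy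
    rw [fderiv_comp_norm_apply hgy hy, real_inner_comm]
  have hcoeff : HasDerivAt (fun r => g' r / r) ((g'' - g' ‖x‖ / ‖x‖) / ‖x‖) ‖x‖ := by
    refine (hg'.div (hasDerivAt_id' _) hr).congr_deriv ?_
    field_simp
  have hprod : HasFDerivAt (fun y => g' ‖y‖ / ‖y‖ * ⟪v, y⟫) _ x :=
    (hcoeff.hasFDerivAt_comp_norm hx).mul (innerSL ℝ v).hasFDerivAt
  rw [hgrad.fderiv_eq, hprod.fderiv]
  simp only [add_apply, smul_apply, innerSL_apply_apply,
    smul_eq_mul, real_inner_self_eq_norm_sq, real_inner_comm v x]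
  field_simp
  ring

theorem sum_fderiv_fderiv_comp_norm {ι : Type*} [Fintype ι] (b : OrthonormalBasis ι ℝ E)
    (hx : x ≠ 0) (hg : ∀ᶠ r in 𝓝 ‖x‖, HasDerivAt g (g' r) r) (hg' : HasDerivAt g' g'' ‖x‖) :
    ∑ i, fderiv ℝ (fun y => fderiv ℝ (fun z => g ‖z‖) y (b i)) x (b i) =
      g'' + (Fintype.card ι - 1) / ‖x‖ * g' ‖x‖ := by
  have hr : ‖x‖ ≠ 0 := norm_ne_zero_iff.mpr hx
  simp only [fderiv_fderiv_comp_norm_apply hx hg hg', Finset.sum_add_distrib, ← Finset.mul_sum,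
    b.sum_sq_inner_left, b.orthonormal.1, one_pow, Finset.sum_const, Finset.card_univ,
    nsmul_eq_mul, mul_one]
  field_simp
  ring

end Radial

theorem stmt_0 : ∀ x : E3, x ≠ 0 → lap W x + ‖x‖⁻¹ * (W x) ^ 3 = 0 := by
  intro x hx
  have hr : 0 < ‖x‖ := norm_pos_iff.mpr hx
  have hW : ∀ r : ℝ, 0 < r → HasDerivAt (fun s : ℝ => (1 + s / 2)⁻¹) (-(1 + r / 2)⁻¹ ^ 2 / 2) r := by
    intro r hr₀
    refine ((((hasDerivAt_id' r).div_const 2).const_add 1).fun_inv (by positivity)).congr_deriv ?_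
    field_simp
  have hW' : HasDerivAt (fun r : ℝ => -(1 + r / 2)⁻¹ ^ 2 / 2) ((1 + ‖x‖ / 2)⁻¹ ^ 3 / 2) ‖x‖ := by
    refine (((hW _ hr).fun_pow 2).neg.div_const 2).congr_deriv ?_
    ring
  have hlap := sum_fderiv_fderiv_comp_norm (EuclideanSpace.basisFun (Fin 3) ℝ) hx
    (eventually_gt_nhds hr |>.mono hW) hW'
  simp only [EuclideanSpace.basisFun_apply, Fintype.card_fin] at hlap
  rw [lap, show W = fun z : E3 => (1 + ‖z‖ / 2)⁻¹ from rfl, hlap]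
  field_simp
  ring
end
end

section
/- For W(x) = 1/(1 + |x|/2) on ℝ³, one has the Pohozaev-type identities ∫_{ℝ³} |∇W(x)|² dx = 8π/3 and ∫_{ℝ³} |x|⁻¹ W(x)⁴ dx = 8π/3. -/
/-! Away from the origin `|∇W|² = W⁴/4`, because the profile `w r = (1 + r/2)⁻¹` solves
`w' = -w²/2`. Polar coordinates in `ℝ³` turn both integrals into `4π ∫₀^∞ r² w⁴/4` and
`4π ∫₀^∞ r w⁴`. Substituting `r = 2 (1/w - 1)` makes the integrands polynomials in `w`,
`r² w⁴ = 4 (w² - 2w³ + w⁴)` and `r w⁴ = 2 (w³ - w⁴)`, with antiderivatives read off from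
`(w ^ k)' = -(k/2) w ^ (k+1)`; the one-dimensional integrals are `8/3` and `2/3`. -/

open MeasureTheory Real

noncomputable section

open Set Filter Topology InnerProductSpace

theorem norm_gradient_comp_norm {F : Type*} [NormedAddCommGroup F] [InnerProductSpace ℝ F]
    [CompleteSpace F] {f : ℝ → ℝ} {f' : ℝ} {x : F} (hx : x ≠ 0) (hf : HasDerivAt f f' ‖x‖) :
    ‖gradient (fun y ↦ f ‖y‖) x‖ = |f'| := by
  have : Nontrivial F := nontrivial_of_ne x 0 hx
  have hn : DifferentiableAt ℝ (‖·‖) x :=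
    (contDiffAt_norm ℝ hx (n := 1)).differentiableAt one_ne_zero
  have h : HasFDerivAt (fun y ↦ f ‖y‖) (f' • fderiv ℝ (‖·‖) x) x :=
    hf.comp_hasFDerivAt x hn.hasFDerivAt
  rw [← (toDual ℝ F).norm_map, toDual_gradient, h.fderiv,
    norm_smul, norm_fderiv_norm hn, Real.norm_eq_abs, mul_one]

theorem integral_fun_norm_euclideanSpace_fin_three {F : Type*} [NormedAddCommGroup F]
    [NormedSpace ℝ F] (f : ℝ → F) :
    ∫ x : EuclideanSpace ℝ (Fin 3), f ‖x‖ = (4 * π) • ∫ r in Ioi (0 : ℝ), r ^ 2 • f r := by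
  rw [integral_fun_norm_addHaar, finrank_euclideanSpace_fin, measureReal_def,
    EuclideanSpace.volume_ball_fin_three]
  simp only [ENNReal.ofReal_one, one_pow, one_mul, ← Nat.cast_smul_eq_nsmul ℝ, smul_smul,
    ENNReal.toReal_ofReal (by positivity : (0 : ℝ) ≤ π * 4 / 3)]
  congr 1
  ring

namespace W

def radial (r : ℝ) : ℝ := (1 + r / 2)⁻¹

theorem hasDerivAt_radial {r : ℝ} (hr : r ≠ -2) : HasDerivAt radial (-(radial r ^ 2 / 2)) r := by
  have h : 1 + r / 2 ≠ 0 := fun h ↦ hr (by linarith)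
  have h₁ : HasDerivAt (fun s ↦ 1 + s / 2) (1 / 2) r := ((hasDerivAt_id r).div_const 2).const_add 1
  refine (h₁.inv h).congr_deriv ?_
  simp only [radial]
  field_simp

theorem hasDerivAt_radial_pow (k : ℕ) {r : ℝ} (hr : r ≠ -2) :
    HasDerivAt (fun s ↦ radial s ^ k) (-(k / 2) * radial r ^ (k + 1)) r := by
  refine ((hasDerivAt_radial hr).pow k).congr_deriv ?_
  rcases k with _ | k
  · simp
  · push_cast
    ring

theorem tendsto_radial_atTop : Tendsto radial atTop (𝓝 0) :=
  tendsto_inv_atTop_zero.comp <| tendsto_atTop_add_const_left _ 1 <|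
    tendsto_id.atTop_div_const two_pos

theorem integral_Ioi_sq_mul_radial_pow_four :
    ∫ r in Ioi (0 : ℝ), r ^ 2 * radial r ^ 4 = 8 / 3 := by
  have hderiv : ∀ r ∈ Ici (0 : ℝ), HasDerivAt
      (fun s ↦ -8 * radial s ^ 1 + 8 * radial s ^ 2 - 8 / 3 * radial s ^ 3)
      (r ^ 2 * radial r ^ 4) r := by
    intro r hr
    have hr' : r ≠ -2 := by linarith [mem_Ici.1 hr]
    refine ((((hasDerivAt_radial_pow 1 hr').const_mul (-8)).add
      ((hasDerivAt_radial_pow 2 hr').const_mul 8)).sub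
      ((hasDerivAt_radial_pow 3 hr').const_mul (8 / 3))).congr_deriv ?_
    norm_num [radial]
    field_simp
    ring
  have hlim : Tendsto (fun s ↦ -8 * radial s ^ 1 + 8 * radial s ^ 2 - 8 / 3 * radial s ^ 3)
      atTop (𝓝 0) := by
    simpa using (((tendsto_radial_atTop.pow 1).const_mul (-8)).add
      ((tendsto_radial_atTop.pow 2).const_mul 8)).sub
      ((tendsto_radial_atTop.pow 3).const_mul (8 / 3))
  rw [integral_Ioi_of_hasDerivAt_of_nonneg' hderiv (fun r _ ↦ by positivity) hlim]
  norm_num [radial]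

theorem integral_Ioi_mul_radial_pow_four :
    ∫ r in Ioi (0 : ℝ), r * radial r ^ 4 = 2 / 3 := by
  have hderiv : ∀ r ∈ Ici (0 : ℝ), HasDerivAt
      (fun s ↦ -2 * radial s ^ 2 + 4 / 3 * radial s ^ 3) (r * radial r ^ 4) r := by
    intro r hr
    have hr' : r ≠ -2 := by linarith [mem_Ici.1 hr]
    refine (((hasDerivAt_radial_pow 2 hr').const_mul (-2)).add
      ((hasDerivAt_radial_pow 3 hr').const_mul (4 / 3))).congr_deriv ?_
    norm_num [radial]
    field_simp
    ring
  have hlim : Tendsto (fun s ↦ -2 * radial s ^ 2 + 4 / 3 * radial s ^ 3) atTop (𝓝 0) := by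
    simpa using ((tendsto_radial_atTop.pow 2).const_mul (-2)).add
      ((tendsto_radial_atTop.pow 3).const_mul (4 / 3))
  rw [integral_Ioi_of_hasDerivAt_of_nonneg' hderiv
    (fun r hr ↦ by have := mem_Ioi.1 hr; positivity) hlim]
  norm_num [radial]

theorem norm_gradient_sq {x : E3} (hx : x ≠ 0) : ‖gradient W x‖ ^ 2 = W x ^ 4 / 4 := by
  have h := norm_gradient_comp_norm hx (hasDerivAt_radial (by linarith [norm_nonneg x]))
  change ‖gradient (fun y ↦ radial ‖y‖) x‖ ^ 2 = _
  rw [h, sq_abs]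
  simp only [W, radial]
  ring

end W

theorem stmt_1 :
    (∫ x : E3, ‖gradient W x‖ ^ 2) = 8 * π / 3 ∧
    (∫ x : E3, ‖x‖⁻¹ * (W x) ^ 4) = 8 * π / 3 := by
  constructor
  · calc ∫ x : E3, ‖gradient W x‖ ^ 2 = ∫ x : E3, W.radial ‖x‖ ^ 4 / 4 :=
          integral_congr_ae <| (Measure.ae_ne volume 0).mono fun x hx ↦ W.norm_gradient_sq hx
      _ = 4 * π * ((∫ r in Ioi (0 : ℝ), r ^ 2 * W.radial r ^ 4) / 4) := by
          refine (integral_fun_norm_euclideanSpace_fin_three fun r ↦ W.radial r ^ 4 / 4).trans ?_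
          rw [← integral_div]
          simp only [smul_eq_mul, mul_div_assoc]
      _ = 8 * π / 3 := by rw [W.integral_Ioi_sq_mul_radial_pow_four]; ring
  · calc ∫ x : E3, ‖x‖⁻¹ * W x ^ 4 = 4 * π * ∫ r in Ioi (0 : ℝ), r * W.radial r ^ 4 := by
          change ∫ x : E3, (fun r ↦ r⁻¹ * W.radial r ^ 4) ‖x‖ = _
          refine (integral_fun_norm_euclideanSpace_fin_three fun r ↦ r⁻¹ * W.radial r ^ 4).trans ?_
          rw [smul_eq_mul]
          congr 2 with r
          rw [smul_eq_mul, ← mul_assoc, sq, mul_self_mul_inv]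
      _ = 8 * π / 3 := by rw [W.integral_Ioi_mul_radial_pow_four]; ring
end
end
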